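/- Let α₁, α₂, α₃ : ℝ² → ℝ be smooth, set h = ∂x α₁ + α₁α₂ − α₃ and k = ∂y α₂ + α₁α₂ − α₃, and assume h is nowhere vanishing. Define the coefficients of the X₁-transformed operator by α′₁ = α₁ − h_y/h, α′₂ = α₂, α′₃ = ∂y α₂ + α₁α₂ − α₂·h_y/h − h, and let h₍₁₎ = ∂x α′₁ + α′₁α′₂ − α′₃ and k₍₁₎ = ∂y α′₂ + α′₁α′₂ − α′₃ be its Laplace invariants. Then h₍₁₎ = 2h − k − ∂x(h_y/h) and k₍₁₎ = h. -/

import Mathlib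

/-- Partial derivative with respect to the first variable. -/
noncomputable def pdx (f : ℝ → ℝ → ℝ) : ℝ → ℝ → ℝ := fun x y => deriv (fun s => f s y) x

/-- Partial derivative with respect to the second variable. -/
noncomputable def pdy (f : ℝ → ℝ → ℝ) : ℝ → ℝ → ℝ := fun x y => deriv (fun t => f x t) y

/-- A function of two real variables is smooth. -/
def Smooth2 (f : ℝ → ℝ → ℝ) : Prop := ContDiff ℝ (⊤ : ℕ∞) (Function.uncurry f)

/-- The Laplace invariant h = ∂x α₁ + α₁α₂ − α₃ of L u = u_xy + α₁u_x + α₂u_y + α₃u. -/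
noncomputable def laplaceH (α₁ α₂ α₃ : ℝ → ℝ → ℝ) : ℝ → ℝ → ℝ :=
  fun x y => pdx α₁ x y + α₁ x y * α₂ x y - α₃ x y

/-- The Laplace invariant k = ∂y α₂ + α₁α₂ − α₃ of L u = u_xy + α₁u_x + α₂u_y + α₃u. -/
noncomputable def laplaceK (α₁ α₂ α₃ : ℝ → ℝ → ℝ) : ℝ → ℝ → ℝ :=
  fun x y => pdy α₂ x y + α₁ x y * α₂ x y - α₃ x y

/-- Coefficient α′₁ = α₁ − h_y/h of the X₁-transformed operator. -/
noncomputable def lapA1' (α₁ α₂ α₃ : ℝ → ℝ → ℝ) : ℝ → ℝ → ℝ :=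
  fun x y => α₁ x y - pdy (laplaceH α₁ α₂ α₃) x y / laplaceH α₁ α₂ α₃ x y

/-- Coefficient α′₂ = α₂ of the X₁-transformed operator. -/
noncomputable def lapA2' (α₁ α₂ α₃ : ℝ → ℝ → ℝ) : ℝ → ℝ → ℝ := α₂

/-- Coefficient α′₃ = ∂y α₂ + α₁α₂ − α₂·h_y/h − h of the X₁-transformed operator. -/
noncomputable def lapA3' (α₁ α₂ α₃ : ℝ → ℝ → ℝ) : ℝ → ℝ → ℝ :=
  fun x y => pdy α₂ x y + α₁ x y * α₂ x y
    - α₂ x y * pdy (laplaceH α₁ α₂ α₃) x y / laplaceH α₁ α₂ α₃ x y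
    - laplaceH α₁ α₂ α₃ x y

section Helpers
open Function

lemma smooth2_diffx {f : ℝ → ℝ → ℝ} (hf : Smooth2 f) (x y : ℝ) :
    DifferentiableAt ℝ (fun s => f s y) x :=
  by have hd : Differentiable ℝ (uncurry f) := hf.differentiable (by simp)
     have := (hd (x, y)).comp x
      (differentiableAt_id.prodMk (differentiableAt_const y) :
        DifferentiableAt ℝ (fun s : ℝ => (id s, y)) x); exact this

lemma pdx_eq {f : ℝ → ℝ → ℝ} (hf : Smooth2 f) (x y : ℝ) :
    pdx f x y = fderiv ℝ (uncurry f) (x, y) (1, 0) := by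
  have h1 : HasDerivAt (fun s : ℝ => (s, y)) ((1 : ℝ), (0 : ℝ)) x :=
    (hasDerivAt_id x).prodMk (hasDerivAt_const x y)
  exact ((hf.differentiable (by simp) (x, y)).hasFDerivAt.comp_hasDerivAt x h1).deriv

lemma pdy_eq {f : ℝ → ℝ → ℝ} (hf : Smooth2 f) (x y : ℝ) :
    pdy f x y = fderiv ℝ (uncurry f) (x, y) (0, 1) := by
  have h1 : HasDerivAt (fun t : ℝ => (x, t)) ((0 : ℝ), (1 : ℝ)) y :=
    (hasDerivAt_const y x).prodMk (hasDerivAt_id y)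
  exact ((hf.differentiable (by simp) (x, y)).hasFDerivAt.comp_hasDerivAt y h1).deriv

lemma smooth2_pdx {f : ℝ → ℝ → ℝ} (hf : Smooth2 f) : Smooth2 (pdx f) := by
  have h : Function.uncurry (pdx f) = fun p : ℝ × ℝ => fderiv ℝ (uncurry f) p (1, 0) := by
    funext p; exact pdx_eq hf p.1 p.2
  rw [Smooth2, h]
  exact (ContinuousLinearMap.apply ℝ ℝ ((1:ℝ),(0:ℝ))).contDiff.comp (hf.fderiv_right (by simp))

lemma smooth2_pdy {f : ℝ → ℝ → ℝ} (hf : Smooth2 f) : Smooth2 (pdy f) := by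
  have h : Function.uncurry (pdy f) = fun p : ℝ × ℝ => fderiv ℝ (uncurry f) p (0, 1) := by
    funext p; exact pdy_eq hf p.1 p.2
  rw [Smooth2, h]
  exact (ContinuousLinearMap.apply ℝ ℝ ((0:ℝ),(1:ℝ))).contDiff.comp (hf.fderiv_right (by simp))

lemma smooth2_laplaceH {α₁ α₂ α₃ : ℝ → ℝ → ℝ}
    (hα₁ : Smooth2 α₁) (hα₂ : Smooth2 α₂) (hα₃ : Smooth2 α₃) :
    Smooth2 (laplaceH α₁ α₂ α₃) :=
  ContDiff.sub (ContDiff.add (smooth2_pdx hα₁) (ContDiff.mul hα₁ hα₂)) hα₃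

end Helpers

/-- Laplace invariants of the X₁-transformed operator:
    h₍₁₎ = 2h − k − ∂x(h_y/h) and k₍₁₎ = h. -/
theorem laplace_invariants_of_transformed_operator
    (α₁ α₂ α₃ : ℝ → ℝ → ℝ)
    (hα₁ : Smooth2 α₁) (hα₂ : Smooth2 α₂) (hα₃ : Smooth2 α₃)
    (hne : ∀ x y : ℝ, laplaceH α₁ α₂ α₃ x y ≠ 0) :
    (∀ x y : ℝ,
      laplaceH (lapA1' α₁ α₂ α₃) (lapA2' α₁ α₂ α₃) (lapA3' α₁ α₂ α₃) x y
        = 2 * laplaceH α₁ α₂ α₃ x y - laplaceK α₁ α₂ α₃ x y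
          - pdx (fun x y => pdy (laplaceH α₁ α₂ α₃) x y / laplaceH α₁ α₂ α₃ x y) x y) ∧
    (∀ x y : ℝ,
      laplaceK (lapA1' α₁ α₂ α₃) (lapA2' α₁ α₂ α₃) (lapA3' α₁ α₂ α₃) x y
        = laplaceH α₁ α₂ α₃ x y) := by
  have hH : Smooth2 (laplaceH α₁ α₂ α₃) := smooth2_laplaceH hα₁ hα₂ hα₃
  have hpH : Smooth2 (pdy (laplaceH α₁ α₂ α₃)) := smooth2_pdy hH
  constructor
  · intro x y
    have d1 : DifferentiableAt ℝ (fun s => α₁ s y) x := smooth2_diffx hα₁ x y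
    have d2 : DifferentiableAt ℝ
        (fun s => pdy (laplaceH α₁ α₂ α₃) s y / laplaceH α₁ α₂ α₃ s y) x :=
      (smooth2_diffx hpH x y).div (smooth2_diffx hH x y) (hne x y)
    have key : pdx (lapA1' α₁ α₂ α₃) x y
        = pdx α₁ x y
          - pdx (fun x y => pdy (laplaceH α₁ α₂ α₃) x y / laplaceH α₁ α₂ α₃ x y) x y := by
      show deriv (fun s => α₁ s y
        - pdy (laplaceH α₁ α₂ α₃) s y / laplaceH α₁ α₂ α₃ s y) x = _
      rw [deriv_fun_sub d1 d2]; rfl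
    show pdx (lapA1' α₁ α₂ α₃) x y
        + lapA1' α₁ α₂ α₃ x y * lapA2' α₁ α₂ α₃ x y - lapA3' α₁ α₂ α₃ x y = _
    rw [key]
    show pdx α₁ x y
        - pdx (fun x y => pdy (laplaceH α₁ α₂ α₃) x y / laplaceH α₁ α₂ α₃ x y) x y
        + (α₁ x y - pdy (laplaceH α₁ α₂ α₃) x y / laplaceH α₁ α₂ α₃ x y) * α₂ x y
        - (pdy α₂ x y + α₁ x y * α₂ x y
            - α₂ x y * pdy (laplaceH α₁ α₂ α₃) x y / laplaceH α₁ α₂ α₃ x y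
            - laplaceH α₁ α₂ α₃ x y)
        = 2 * laplaceH α₁ α₂ α₃ x y - laplaceK α₁ α₂ α₃ x y
          - pdx (fun x y => pdy (laplaceH α₁ α₂ α₃) x y / laplaceH α₁ α₂ α₃ x y) x y
    simp only [laplaceH, laplaceK]
    ring
  · intro x y
    show pdy α₂ x y + lapA1' α₁ α₂ α₃ x y * α₂ x y - lapA3' α₁ α₂ α₃ x y = _
    simp only [lapA1', lapA3']
    ring
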